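/- For every k ≥ 1 and sufficiently large n, the k-star graph S_{k,n} satisfies μ(S_{k,n}) ≥ 2^k. In particular, there exist graphs with coloring number k+1 whose hat guessing number is at least 2^k. -/

import Mathlib

/-- The hat guessing number of a graph. -/
noncomputable def hatGuessingNumber {V : Type*} [Fintype V] (G : SimpleGraph V) : ℕ :=
  sSup {k : ℕ | ∃ F : V → (V → Fin k) → Fin k,
    (∀ v : V, ∀ x y : V → Fin k, (∀ u : V, G.Adj v u → x u = y u) → F v x = F v y) ∧
    (∀ x : V → Fin k, ∃ v : V, F v x = x v)}

/-- The coloring number `col(G)`: the least `c` such that there is a linear order of the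
vertices in which every vertex has at most `c−1` earlier neighbors. -/
noncomputable def coloringNumber {V : Type*} [Fintype V] (G : SimpleGraph V) : ℕ :=
  sInf {c : ℕ | ∃ π : Fin (Fintype.card V) ≃ V,
    ∀ t : Fin (Fintype.card V),
      Set.ncard {u : V | G.Adj (π t) u ∧ π.symm u < t} ≤ c - 1}

/-- The `k`-star `S_{k,n}`: the join of a clique on `k` vertices with an independent set
of `n` vertices (each clique vertex adjacent to all `n` leaves). -/
def kStar (k n : ℕ) : SimpleGraph (Fin k ⊕ Fin n) :=
  SimpleGraph.fromRel (fun x y =>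
    match x, y with
    | Sum.inl _, Sum.inr _ => True
    | Sum.inl _, Sum.inl _ => True
    | _, _ => False)

/-!
The clique `K_k` alone, with any set of colours, can win against any prescribed set `A` of fewer
than `2 ^ k` colourings: sorting `A` by the colour of the last vertex, at most one fibre has
`2 ^ (k - 1)` or more elements; the last vertex bets on that colour, and the others play, by
induction, against the fibre of the colour they see on the last vertex.

In `S_{k,n}` with `q = 2 ^ k` colours, put each leaf in charge of a different `q`-set `S` of clique
colourings, on which it guesses through a bijection `S → Fin q`. Whatever the leaves wear, fewer
than `q` clique colourings then defeat every leaf, and the clique, which sees all the leaves, wins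
against exactly these.

For the coloring number, list the clique first; conversely `S_{k,n}` contains a `(k+1)`-clique.
-/

open Finset

namespace SimpleGraph

variable {V α : Type*}

def IsHatStrategy (G : SimpleGraph V) (F : V → (V → α) → α) : Prop :=
  ∀ v x y, (∀ u, G.Adj v u → x u = y u) → F v x = F v y

def IsWinningHatStrategy (G : SimpleGraph V) (F : V → (V → α) → α) : Prop :=
  G.IsHatStrategy F ∧ ∀ x, ∃ v, F v x = x v

variable [Fintype V]

lemma IsHatStrategy.card_filter_guess_correct_le [DecidableEq V] [Fintype α] [DecidableEq α]
    {G : SimpleGraph V} {F : V → (V → α) → α} (hF : G.IsHatStrategy F) (u : V) :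
    #{x | F u x = x u} ≤ Fintype.card α ^ (Fintype.card V - 1) := by
  have hcard : Fintype.card ({w // w ≠ u} → α) = Fintype.card α ^ (Fintype.card V - 1) := by
    rw [Fintype.card_fun, Fintype.card_subtype_compl, Fintype.card_subtype_eq]
  rw [← hcard, ← card_univ]
  refine card_le_card_of_injOn (fun x w => x w.1) (fun _ _ => mem_univ _) ?_
  intro x hx y hy hxy
  have hne : ∀ w, w ≠ u → x w = y w := fun w hw => congrFun hxy ⟨w, hw⟩
  funext w
  by_cases hw : w = u
  · subst hw
    rw [mem_coe, mem_filter] at hx hy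
    -- `F w` does not look at `w`'s own hat, and the guess is correct for both `x` and `y`
    rw [← hx.2, ← hy.2, hF w x y fun z hz => hne z (G.ne_of_adj hz).symm]
  · exact hne w hw

lemma IsWinningHatStrategy.card_le [Fintype α] {G : SimpleGraph V}
    {F : V → (V → α) → α} (hF : G.IsWinningHatStrategy F) :
    Fintype.card α ≤ Fintype.card V := by
  classical
  rcases isEmpty_or_nonempty α with hα | hα
  · simp
  obtain ⟨v, -⟩ := hF.2 fun _ => Classical.arbitrary α
  have : Nonempty V := ⟨v⟩
  obtain ⟨d, hd⟩ : ∃ d, Fintype.card V = d + 1 := Nat.exists_eq_succ_of_ne_zero Fintype.card_ne_zero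
  have hcover : (univ : Finset (V → α)) = univ.biUnion fun u => {x | F u x = x u} := by
    ext x
    simpa using hF.2 x
  have hcount : Fintype.card α ^ (d + 1) ≤ (d + 1) * Fintype.card α ^ d := by
    calc Fintype.card α ^ (d + 1) = #(univ : Finset (V → α)) := by simp [hd]
      _ ≤ ∑ u, #{x | F u x = x u} := (congrArg card hcover).trans_le card_biUnion_le
      _ ≤ ∑ _u : V, Fintype.card α ^ d := sum_le_sum fun u _ => by
          simpa [hd] using hF.1.card_filter_guess_correct_le u
      _ = (d + 1) * Fintype.card α ^ d := by simp [hd]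
  rw [hd]
  exact Nat.le_of_mul_le_mul_right (by rwa [pow_succ, mul_comm] at hcount)
    (pow_pos Fintype.card_pos d)

lemma le_hatGuessingNumber {G : SimpleGraph V} {m : ℕ} {F : V → (V → Fin m) → Fin m}
    (hF : G.IsWinningHatStrategy F) : m ≤ hatGuessingNumber G := by
  refine le_csSup ⟨Fintype.card V, ?_⟩ ⟨F, hF⟩
  rintro m' ⟨F', hF'⟩
  simpa using IsWinningHatStrategy.card_le hF'

def HasColoringOrder (G : SimpleGraph V) (c : ℕ) : Prop :=
  ∃ π : Fin (Fintype.card V) ≃ V, ∀ t, {u | G.Adj (π t) u ∧ π.symm u < t}.ncard ≤ c - 1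

/-- The vertex of the clique that comes last has all the others as earlier neighbours. -/
lemma IsNClique.sub_one_le_of_hasColoringOrder [DecidableEq V] {G : SimpleGraph V} {s c : ℕ}
    {W : Finset V} (hW : G.IsNClique s W) (hc : G.HasColoringOrder c) : s - 1 ≤ c - 1 := by
  obtain ⟨π, hπ⟩ := hc
  rcases W.eq_empty_or_nonempty with rfl | hne
  · simp [← hW.card_eq]
  set t := (W.image π.symm).max' (hne.image _)
  obtain ⟨v, hvW, hvt⟩ := mem_image.1 ((W.image π.symm).max'_mem (hne.image _))
  have hv : π t = v := by rw [← π.apply_symm_apply v, hvt]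
  have hsub : ↑(W.erase v) ⊆ {u | G.Adj (π t) u ∧ π.symm u < t} := by
    intro u hu
    obtain ⟨huv, huW⟩ := mem_erase.1 hu
    refine ⟨hv ▸ hW.isClique hvW huW (Ne.symm huv), lt_of_le_of_ne ?_ fun h => huv ?_⟩
    · exact le_max' _ _ (mem_image_of_mem _ huW)
    · rw [← hv, ← h, Equiv.apply_symm_apply]
  calc s - 1 = #(W.erase v) := by rw [card_erase_of_mem hvW, hW.card_eq]
    _ ≤ _ := by rw [← Set.ncard_coe_finset]; exact Set.ncard_le_ncard hsub
    _ ≤ c - 1 := hπ t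

end SimpleGraph

open SimpleGraph

lemma Finset.exists_forall_ne_card_filter_lt {β γ : Type*} [Nonempty γ] [DecidableEq γ]
    (s : Finset β) (f : β → γ) {m : ℕ} (hs : #s < 2 * m) :
    ∃ t₀, ∀ t ≠ t₀, #{x ∈ s | f x = t} < m := by
  by_cases hbig : ∃ t₀, m ≤ #{x ∈ s | f x = t₀}
  · obtain ⟨t₀, ht₀⟩ := hbig
    refine ⟨t₀, fun t ht => ?_⟩
    have hsub : {x ∈ s | f x = t} ⊆ {x ∈ s | ¬f x = t₀} :=
      fun x hx => by simp only [mem_filter] at hx ⊢; exact ⟨hx.1, hx.2 ▸ ht⟩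
    have := card_filter_add_card_filter_not (s := s) (fun x => f x = t₀)
    have := card_le_card hsub
    omega
  · push Not at hbig
    exact ⟨Classical.arbitrary γ, fun t _ => hbig t⟩

theorem exists_isHatStrategy_top_of_card_lt {α : Type*} [Nonempty α] {k : ℕ}
    (A : Finset (Fin k → α)) (hA : #A < 2 ^ k) :
    ∃ F : Fin k → (Fin k → α) → α, (⊤ : SimpleGraph (Fin k)).IsHatStrategy F ∧
      ∀ c ∈ A, ∃ i, F i c = c i := by
  classical
  induction k with
  | zero =>
    exact ⟨fun i => i.elim0, fun i => i.elim0, fun c hc => by simp_all⟩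
  | succ k ih =>
    set fiber : α → Finset (Fin k → α) := fun t => {c ∈ A | c (Fin.last k) = t}.image Fin.init
    obtain ⟨t₀, ht₀⟩ := A.exists_forall_ne_card_filter_lt (· (Fin.last k)) (m := 2 ^ k)
      (by rwa [← pow_succ'])
    have hfiber : ∀ t, ∃ Ft : Fin k → (Fin k → α) → α, (⊤ : SimpleGraph (Fin k)).IsHatStrategy Ft ∧
        (t ≠ t₀ → ∀ c ∈ fiber t, ∃ i, Ft i c = c i) := by
      intro t
      by_cases ht : t = t₀
      · exact ⟨fun _ _ => t, fun _ _ _ _ => rfl, (absurd ht ·)⟩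
      · obtain ⟨Ft, hloc, hwin⟩ := ih (fiber t) (card_image_le.trans_lt (ht₀ t ht))
        exact ⟨Ft, hloc, fun _ => hwin⟩
    choose Ft hloc hwin using hfiber
    refine ⟨fun i x => Fin.lastCases t₀ (fun j => Ft (x (Fin.last k)) j (Fin.init x)) i, ?_, ?_⟩
    · intro i x y hxy
      induction i using Fin.lastCases with
      | last => simp
      | cast j =>
        have hlast : x (Fin.last k) = y (Fin.last k) :=
          hxy _ (by simp [(Fin.castSucc_lt_last j).ne])
        simp only [Fin.lastCases_castSucc, hlast]
        exact hloc _ j _ _ fun j' hj' => hxy _ (by simpa using hj')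
    · intro c hc
      by_cases hct : c (Fin.last k) = t₀
      · exact ⟨Fin.last k, by simp [hct]⟩
      · obtain ⟨j, hj⟩ := hwin _ hct (Fin.init c) (mem_image_of_mem _ (by simp [hc]))
        exact ⟨j.castSucc, by simpa [Fin.init] using hj⟩

lemma Finset.exists_surjOn_of_card_le {α β : Type*} [Fintype α] [Nonempty α] (S : Finset β)
    (h : Fintype.card α ≤ #S) : ∃ g : β → α, ∀ a, ∃ c ∈ S, g c = a := by
  obtain ⟨e⟩ : Nonempty (α ↪ S) := Function.Embedding.nonempty_of_card_le (by simpa using h)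
  have he : Function.Injective fun a => (e a : β) := Subtype.val_injective.comp e.injective
  exact ⟨Function.invFun fun a => (e a : β),
    fun a => ⟨e a, (e a).2, Function.leftInverse_invFun he a⟩⟩

/-- Each player is put in charge of a different `|α|`-subset of `β`. -/
lemma exists_forall_card_le_exists_surjOn {ι α β : Type*} [Fintype ι] [Fintype α] [Nonempty α]
    [Fintype β] (h : (Fintype.card β).choose (Fintype.card α) ≤ Fintype.card ι) :
    ∃ g : ι → β → α, ∀ S : Finset β, Fintype.card α ≤ #S → ∃ j, ∀ a, ∃ c ∈ S, g j c = a := by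
  classical
  set P := (univ : Finset β).powersetCard (Fintype.card α)
  obtain ⟨σ⟩ : Nonempty (P ↪ ι) :=
    Function.Embedding.nonempty_of_card_le (by simpa [P, card_powersetCard] using h)
  choose gP hgP using fun T : P => T.1.exists_surjOn_of_card_le (α := α)
    (mem_powersetCard.1 T.2).2.ge
  refine ⟨Function.extend σ gP fun _ _ => Classical.arbitrary α, fun S hS => ?_⟩
  obtain ⟨T, hTS, hT⟩ := exists_subset_card_eq hS
  have hTP : T ∈ P := mem_powersetCard.2 ⟨subset_univ T, hT⟩
  refine ⟨σ ⟨T, hTP⟩, fun a => ?_⟩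
  obtain ⟨c, hc, hgc⟩ := hgP ⟨T, hTP⟩ a
  exact ⟨c, hTS hc, by rw [σ.injective.extend_apply]; exact hgc⟩

section kStar

variable {k n : ℕ}

@[simp]
lemma kStar_adj_inl_inl (i j : Fin k) : (kStar k n).Adj (.inl i) (.inl j) ↔ i ≠ j := by
  simp [kStar]

@[simp]
lemma kStar_adj_inl_inr (i : Fin k) (j : Fin n) : (kStar k n).Adj (.inl i) (.inr j) := by
  simp [kStar]

@[simp]
lemma kStar_adj_inr_inl (j : Fin n) (i : Fin k) : (kStar k n).Adj (.inr j) (.inl i) := by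
  simp [kStar]

@[simp]
lemma kStar_adj_inr_inr (i j : Fin n) : ¬(kStar k n).Adj (.inr i) (.inr j) := by
  simp [kStar]

theorem exists_isWinningHatStrategy_kStar {α : Type*} [Fintype α] [Nonempty α]
    (hα : Fintype.card α ≤ 2 ^ k) (hn : (Fintype.card α ^ k).choose (Fintype.card α) ≤ n) :
    ∃ F : (Fin k ⊕ Fin n) → ((Fin k ⊕ Fin n) → α) → α, (kStar k n).IsWinningHatStrategy F := by
  classical
  obtain ⟨g, hg⟩ := exists_forall_card_le_exists_surjOn (ι := Fin n) (α := α) (β := Fin k → α)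
    (by simpa using hn)
  set alive : (Fin n → α) → Finset (Fin k → α) := fun y => {c | ∀ j, g j c ≠ y j}
  have card_alive : ∀ y, #(alive y) < Fintype.card α := by
    intro y
    by_contra! hy
    obtain ⟨j, hj⟩ := hg _ hy
    obtain ⟨c, hc, hgc⟩ := hj (y j)
    exact (mem_filter.1 hc).2 j hgc
  choose cs hcs_loc hcs_win using fun y =>
    exists_isHatStrategy_top_of_card_lt (alive y) ((card_alive y).trans_le hα)
  refine ⟨Sum.elim (fun i x => cs (x ∘ .inr) i (x ∘ .inl)) (fun j x => g j (x ∘ .inl)), ?_, ?_⟩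
  · rintro (i | j) x y hxy
    · have hleaves : x ∘ .inr = y ∘ .inr := funext fun j => hxy _ (kStar_adj_inl_inr i j)
      simp only [Sum.elim_inl, hleaves]
      exact hcs_loc _ i _ _ fun i' hi' => hxy _ (by simpa using hi')
    · have hclique : x ∘ .inl = y ∘ .inl := funext fun i => hxy _ (kStar_adj_inr_inl j i)
      simp only [Sum.elim_inr, hclique]
  · intro x
    by_cases hleaf : ∃ j, g j (x ∘ .inl) = x (.inr j)
    · obtain ⟨j, hj⟩ := hleaf
      exact ⟨.inr j, hj⟩
    · push Not at hleaf
      obtain ⟨i, hi⟩ := hcs_win _ (x ∘ .inl) (mem_filter.2 ⟨mem_univ _, hleaf⟩)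
      exact ⟨.inl i, hi⟩

lemma isNClique_kStar (j : Fin n) :
    (kStar k n).IsNClique (k + 1) (insert (.inr j) (univ.map .inl)) := by
  classical
  refine IsNClique.insert ⟨?_, by simp⟩ (by simp)
  intro a ha b hb hab
  simp only [coe_map, Set.mem_image, mem_coe, mem_univ, true_and] at ha hb
  obtain ⟨i, rfl⟩ := ha
  obtain ⟨i', rfl⟩ := hb
  simpa using hab

/-- Clique first, then the leaves: the earlier neighbours of any vertex all lie in the clique. -/
lemma hasColoringOrder_kStar : (kStar k n).HasColoringOrder (k + 1) := by
  set π : Fin (Fintype.card (Fin k ⊕ Fin n)) ≃ Fin k ⊕ Fin n :=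
    (finCongr (by simp)).trans finSumFinEquiv.symm
  refine ⟨π, fun t => ?_⟩
  have hsub : {u | (kStar k n).Adj (π t) u ∧ π.symm u < t} ⊆ Set.range .inl := by
    rintro (i | j) ⟨hadj, hlt⟩
    · exact ⟨i, rfl⟩
    · cases hπt : π t with
      | inl i =>
        have ht : (t : ℕ) = i := by rw [← π.symm_apply_apply t, hπt]; simp [π]
        have hj : (π.symm (.inr j) : ℕ) = k + j := by simp [π]
        have := Fin.lt_def.1 hlt
        omega
      | inr j' => simp [hπt] at hadj
  calc _ ≤ (Set.range (Sum.inl : Fin k → Fin k ⊕ Fin n)).ncard := Set.ncard_le_ncard hsub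
    _ = k + 1 - 1 := by simp [Set.ncard_range_of_injective Sum.inl_injective]

theorem coloringNumber_kStar (hk : 1 ≤ k) (hn : 1 ≤ n) : coloringNumber (kStar k n) = k + 1 := by
  refine le_antisymm (Nat.sInf_le hasColoringOrder_kStar) (le_csInf ⟨_, hasColoringOrder_kStar⟩ ?_)
  intro c hc
  have := (isNClique_kStar ⟨0, hn⟩).sub_one_le_of_hasColoringOrder hc
  omega

end kStar

/-- For every `k ≥ 1` and sufficiently large `n`, the `k`-star graph
`S_{k,n}` satisfies `μ(S_{k,n}) ≥ 2^k`; moreover its coloring number is `k+1`, so there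
exist graphs with coloring number `k+1` whose hat guessing number is at least `2^k`. -/
theorem kStar_hat_guessing_ge (k : ℕ) (hk : 1 ≤ k) :
    ∃ N : ℕ, ∀ n : ℕ, N ≤ n →
      2 ^ k ≤ hatGuessingNumber (kStar k n) ∧ coloringNumber (kStar k n) = k + 1 := by
  refine ⟨((2 ^ k) ^ k).choose (2 ^ k) + 1, fun n hn => ⟨?_, coloringNumber_kStar hk (by omega)⟩⟩
  obtain ⟨F, hF⟩ := exists_isWinningHatStrategy_kStar (α := Fin (2 ^ k)) (k := k) (n := n)
    (by simp) (by simp only [Fintype.card_fin]; omega)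
  exact le_hatGuessingNumber hF
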